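/- Every 1-safe free-choice workflow net is confusion-free: for every reachable marking M, if t₁ and t₂ are independent transitions both enabled at M and M →t₁ M', then the conflict set of t₂ at M equals the conflict set of t₂ at M' (both equal the cluster [t₂]). -/
import Mathlib


/-- A workflow net: places, transitions, flow given by presets/postsets,
    a distinguished initial place `i` with no incoming arcs and final place `o`
    with no outgoing arcs. -/
structure WFNet where
  P : Type
  T : Type
  pre : T → Set P
  post : T → Set P
  i : P
  o : P
  no_in_i : ∀ t, i ∉ post t
  no_out_o : ∀ t, o ∉ pre t

namespace WFNet

/-- A transition is enabled at a marking if all places of its preset carry a token. -/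
def Enabled (N : WFNet) (M : N.P → ℕ) (t : N.T) : Prop := ∀ p ∈ N.pre t, 1 ≤ M p

open Classical in
/-- Firing `t` removes a token from each preset place and adds one to each postset place. -/
noncomputable def fire (N : WFNet) (M : N.P → ℕ) (t : N.T) : N.P → ℕ :=
  fun p => M p - (if p ∈ N.pre t then 1 else 0) + (if p ∈ N.post t then 1 else 0)

/-- `M →t M'`. -/
def Fires (N : WFNet) (M : N.P → ℕ) (t : N.T) (M' : N.P → ℕ) : Prop :=
  N.Enabled M t ∧ M' = N.fire M t

open Classical in
/-- The initial marking puts one token on `i`. -/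
noncomputable def initial (N : WFNet) : N.P → ℕ := fun p => if p = N.i then 1 else 0

/-- A marking is reachable if some occurrence sequence from the initial marking ends in it. -/
def Reachable (N : WFNet) (M : N.P → ℕ) : Prop :=
  Relation.ReflTransGen (fun M1 M2 => ∃ t, N.Fires M1 t M2) N.initial M

/-- 1-safeness: every reachable marking has at most one token per place. -/
def OneSafe (N : WFNet) : Prop := ∀ M, N.Reachable M → ∀ p, M p ≤ 1

/-- Independent transitions: disjoint presets. -/
def Independent (N : WFNet) (t1 t2 : N.T) : Prop := N.pre t1 ∩ N.pre t2 = ∅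

/-- `t1` and `t2` are in conflict at `M`: both enabled, presets intersect. -/
def ConflictAt (N : WFNet) (M : N.P → ℕ) (t1 t2 : N.T) : Prop :=
  N.Enabled M t1 ∧ N.Enabled M t2 ∧ (N.pre t1 ∩ N.pre t2).Nonempty

/-- Free-choice: postsets of any two places are disjoint or equal. -/
def FreeChoice (N : WFNet) : Prop :=
  ∀ p1 p2 : N.P, {t | p1 ∈ N.pre t} ∩ {t | p2 ∈ N.pre t} = ∅ ∨
    {t | p1 ∈ N.pre t} = {t | p2 ∈ N.pre t}

/-- The cluster of `t`: all transitions whose preset intersects that of `t`. -/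
def cluster (N : WFNet) (t : N.T) : Set N.T := {t' | (N.pre t ∩ N.pre t').Nonempty}

/-- The conflict set of `t` at `M`: transitions enabled at `M` in conflict with `t`. -/
def conflictSet (N : WFNet) (M : N.P → ℕ) (t : N.T) : Set N.T :=
  {t' | N.Enabled M t' ∧ (N.pre t ∩ N.pre t').Nonempty}

end WFNet

/-- 1-safe free-choice workflow nets are confusion-free: for independent
transitions `t1, t2` enabled at a reachable marking `M` with `M →t1 M'`, the conflict
set of `t2` at `M` equals that at `M'`, and both equal the cluster of `t2`. -/
theorem stmt_3 (N : WFNet) (hsafe : N.OneSafe) (hfc : N.FreeChoice)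
    (M M' : N.P → ℕ) (hM : N.Reachable M)
    (t1 t2 : N.T) (hindep : N.Independent t1 t2)
    (h1 : N.Enabled M t1) (h2 : N.Enabled M t2)
    (hfire : N.Fires M t1 M') :
    N.conflictSet M t2 = N.conflictSet M' t2 ∧
      N.conflictSet M t2 = N.cluster t2 := by
  -- free-choice: any transition in the cluster of t2 has the same preset
  have hpre : ∀ t' : N.T, (N.pre t2 ∩ N.pre t').Nonempty → N.pre t' = N.pre t2 := by
    rintro t' ⟨p, hp2, hp'⟩
    ext q
    constructor
    · intro hq
      rcases hfc q p with h | h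
      · exact absurd (Set.eq_empty_iff_forall_notMem.mp h t' ⟨hq, hp'⟩) (fun h => h)
      · exact (Set.ext_iff.mp h.symm t2).mp hp2
    · intro hq
      rcases hfc q p with h | h
      · exact absurd (Set.eq_empty_iff_forall_notMem.mp h t2 ⟨hq, hp2⟩) (fun h => h)
      · exact (Set.ext_iff.mp h t').mpr hp'
  -- t2 still enabled at M'
  have h2' : N.Enabled M' t2 := by
    intro p hp
    have hnp1 : p ∉ N.pre t1 := fun h =>
      Set.eq_empty_iff_forall_notMem.mp hindep p ⟨h, hp⟩
    rw [hfire.2]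
    unfold WFNet.fire
    simp only [if_neg hnp1, Nat.sub_zero]
    exact le_trans (h2 p hp) (Nat.le_add_right _ _)
  have key : ∀ (M0 : N.P → ℕ), N.Enabled M0 t2 → N.conflictSet M0 t2 = N.cluster t2 := by
    intro M0 hM0
    ext t'
    constructor
    · rintro ⟨_, hne⟩; exact hne
    · intro hne
      refine ⟨?_, hne⟩
      intro p hp
      rw [hpre t' hne] at hp
      exact hM0 p hp
  rw [key M h2, key M' h2']
  exact ⟨rfl, rfl⟩
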